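/- arXiv:0809.3367 — 2 statements merged into one kernel-verified Lean document; each statement's English description precedes it below -/
import Mathlib

section
/- Assume the Bethe equations hold. Define Y(x) = V′(x) − 2ħ ∑_{i=1}^m 1/(x − s_i) for x ∈ ℂ \ {s_1,…,s_m}, and let U = (V′)² − 2ħV″ − 4ħ ∑_{i=1}^m Q_i ∈ ℂ[X], where for each i, Q_i ∈ ℂ[X] is the unique polynomial with V′ − V′(s_i) = (X − s_i)·Q_i. Then Y satisfies the Riccati equation Y(x)² − 2ħ Y′(x) = U(x) for every x ∈ ℂ \ {s_1,…,s_m}. -/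
open Finset Polynomial

/-!
Write `S(x) = ∑ᵢ 1/(x - sᵢ)`, so `Y = V′ - 2ħS` and `Y′ = V″ + 2ħ ∑ᵢ 1/(x - sᵢ)²`. In `S²` the
diagonal terms cancel against `Y′`, and by partial fractions the cross terms become
`2 ∑ᵢ 1/(x - sᵢ) ∑_{j≠i} 1/(sᵢ - sⱼ)`, which the Bethe equations turn into
`(1/ħ) ∑ᵢ V′(sᵢ)/(x - sᵢ)`. The remaining rational part `-4ħ ∑ᵢ (V′(x) - V′(sᵢ))/(x - sᵢ)` is
exactly `-4ħ ∑ᵢ Qᵢ(x)`.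
-/

theorem Finset.sum_sum_erase_comm {ι M : Type*} [Fintype ι] [DecidableEq ι] [AddCommMonoid M]
    (f : ι → ι → M) :
    ∑ i, ∑ j ∈ univ.erase i, f j i = ∑ i, ∑ j ∈ univ.erase i, f i j :=
  Finset.sum_comm' (by simp [eq_comm, and_comm])

theorem hasDerivAt_sum_one_div_sub {𝕜 ι : Type*} [NontriviallyNormedField 𝕜] [Fintype ι]
    (s : ι → 𝕜) {x : 𝕜} (hx : ∀ i, x ≠ s i) :
    HasDerivAt (fun y => ∑ i, 1 / (y - s i)) (-∑ i, 1 / (x - s i) ^ 2) x := by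
  rw [← Finset.sum_neg_distrib]
  refine HasDerivAt.fun_sum fun i _ => ?_
  simpa [one_div, neg_div, Pi.inv_def] using
    ((hasDerivAt_id x).sub_const (s i)).inv (sub_ne_zero.mpr (hx i))

theorem one_div_sub_mul_one_div_sub {K : Type*} [Field K] {x a b : K}
    (hxa : x ≠ a) (hxb : x ≠ b) (hab : a ≠ b) :
    1 / (x - a) * (1 / (x - b)) = 1 / (x - a) * (1 / (a - b)) + 1 / (x - b) * (1 / (b - a)) := by
  have := sub_ne_zero.mpr hxa
  have := sub_ne_zero.mpr hxb
  have := sub_ne_zero.mpr hab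
  have := sub_ne_zero.mpr hab.symm
  field_simp
  ring

theorem sq_sum_one_div_sub {K ι : Type*} [Field K] [Fintype ι] [DecidableEq ι]
    {s : ι → K} (hs : Function.Injective s) {x : K} (hx : ∀ i, x ≠ s i) :
    (∑ i, 1 / (x - s i)) ^ 2
      = ∑ i, 1 / (x - s i) ^ 2 + 2 * ∑ i, 1 / (x - s i) * ∑ j ∈ univ.erase i, 1 / (s i - s j) := by
  have hcross : ∑ i, ∑ j ∈ univ.erase i, 1 / (x - s i) * (1 / (x - s j))
      = ∑ i, ∑ j ∈ univ.erase i, 1 / (x - s i) * (1 / (s i - s j))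
        + ∑ i, ∑ j ∈ univ.erase i, 1 / (x - s j) * (1 / (s j - s i)) := by
    rw [← Finset.sum_add_distrib]
    refine Finset.sum_congr rfl fun i _ => ?_
    rw [← Finset.sum_add_distrib]
    refine Finset.sum_congr rfl fun j hj => ?_
    exact one_div_sub_mul_one_div_sub (hx i) (hx j) (hs.ne (Finset.ne_of_mem_erase hj).symm)
  rw [Finset.sum_sum_erase_comm (fun i j => 1 / (x - s i) * (1 / (s i - s j))), ← two_mul]
    at hcross
  calc (∑ i, 1 / (x - s i)) ^ 2 = ∑ i, ∑ j, 1 / (x - s i) * (1 / (x - s j)) := by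
        rw [sq, Finset.sum_mul_sum]
    _ = ∑ i, 1 / (x - s i) ^ 2 + ∑ i, ∑ j ∈ univ.erase i, 1 / (x - s i) * (1 / (x - s j)) := by
        rw [← Finset.sum_add_distrib]
        refine Finset.sum_congr rfl fun i _ => ?_
        rw [← Finset.add_sum_erase _ _ (Finset.mem_univ i), one_div_mul_one_div, sq]
    _ = _ := by simp only [hcross, Finset.mul_sum]

theorem Polynomial.eval_eq_mul_one_div_of_sub_C_eq_mul {K : Type*} [Field K] {P q : K[X]} {a x : K}
    (hq : P - C (P.eval a) = (X - C a) * q) (hx : x ≠ a) :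
    q.eval x = (P.eval x - P.eval a) * (1 / (x - a)) := by
  have h := congrArg (eval x) hq
  simp only [eval_sub, eval_mul, eval_X, eval_C] at h
  rw [h, mul_comm, ← mul_assoc, one_div_mul_cancel (sub_ne_zero.mpr hx), one_mul]

theorem riccati_equation_general (m : ℕ) (hbar : ℂ) (V : Polynomial ℂ)
    (s : Fin m → ℂ) (hs : Function.Injective s)
    (hBethe : ∀ i, V.derivative.eval (s i)
      = 2 * hbar * ∑ j ∈ univ.erase i, 1 / (s i - s j))
    (Q : Fin m → Polynomial ℂ)
    (hQ : ∀ i, V.derivative - C (V.derivative.eval (s i)) = (X - C (s i)) * Q i)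
    (x : ℂ) (hx : ∀ i, x ≠ s i) :
    (V.derivative.eval x - 2 * hbar * ∑ i, 1 / (x - s i)) ^ 2
        - 2 * hbar *
          deriv (fun y : ℂ => V.derivative.eval y - 2 * hbar * ∑ i, 1 / (y - s i)) x
      = (V.derivative ^ 2 - C (2 * hbar) * derivative V.derivative
          - C (4 * hbar) * ∑ i, Q i).eval x := by
  have hY : HasDerivAt (fun y => V.derivative.eval y - 2 * hbar * ∑ i, 1 / (y - s i))
      (V.derivative.derivative.eval x - 2 * hbar * -∑ i, 1 / (x - s i) ^ 2) x :=
    (V.derivative.hasDerivAt x).sub ((hasDerivAt_sum_one_div_sub s hx).const_mul (2 * hbar))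
  have hBethe_sum : ∑ i, V.derivative.eval (s i) * (1 / (x - s i))
      = 2 * hbar * ∑ i, 1 / (x - s i) * ∑ j ∈ univ.erase i, 1 / (s i - s j) := by
    rw [Finset.mul_sum]; simp only [hBethe]
    exact Finset.sum_congr rfl fun i _ => by ring
  rw [hY.deriv]
  simp only [eval_sub, eval_mul, eval_pow, eval_C, eval_finsetSum,
    fun i => eval_eq_mul_one_div_of_sub_C_eq_mul (hQ i) (hx i), sub_mul, Finset.sum_sub_distrib,
    ← Finset.mul_sum]
  linear_combination (4 * hbar ^ 2) * sq_sum_one_div_sub hs hx - 4 * hbar * hBethe_sum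

/-- Assume the Bethe equations. With
`Y(x) = V′(x) − 2ħ ∑ i, 1/(x − s i)` and
`U = (V′)² − 2ħ V″ − 4ħ ∑ i, Q i`, where `Q i` is the (unique) polynomial with
`V′ − V′(s i) = (X − s i)·Q i`, the Riccati equation `Y(x)² − 2ħ Y′(x) = U(x)` holds for
every `x ∈ ℂ \ {s 1, …, s m}`. -/
theorem riccati_equation (m : ℕ) (hbar : ℂ) (hhbar : hbar ≠ 0) (V : Polynomial ℂ)
    (s : Fin m → ℂ) (hs : Function.Injective s)
    (hBethe : ∀ i, V.derivative.eval (s i)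
      = 2 * hbar * ∑ j ∈ univ.erase i, 1 / (s i - s j))
    (Q : Fin m → Polynomial ℂ)
    (hQ : ∀ i, V.derivative - C (V.derivative.eval (s i)) = (X - C (s i)) * Q i)
    (x : ℂ) (hx : ∀ i, x ≠ s i) :
    (V.derivative.eval x - 2 * hbar * ∑ i, 1 / (x - s i)) ^ 2
        - 2 * hbar *
          deriv (fun y : ℂ => V.derivative.eval y - 2 * hbar * ∑ i, 1 / (y - s i)) x
      = (V.derivative ^ 2 - C (2 * hbar) * derivative V.derivative
          - C (4 * hbar) * ∑ i, Q i).eval x :=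
  riccati_equation_general m hbar V s hs hBethe Q hQ x hx
end

section
/- Let V ∈ ℂ[X], let I ⊆ ℝ \ {0} be an interval, and let s : I → ℂ^m be a differentiable map whose coordinates s_1(ħ),…,s_m(ħ) are pairwise distinct for every ħ ∈ I, satisfying for all ħ ∈ I and all i the Bethe equations V′(s_i(ħ)) = 2ħ ∑_{j≠i} 1/(s_i(ħ) − s_j(ħ)). Then for all ħ ∈ I and all i: V′(s_i(ħ)) = ħ² ∑_{j=1}^m T_{ij}(ħ) · s_j′(ħ), where T(ħ) is the Hessian matrix at the points s(ħ): T_{ii}(ħ) = (1/ħ)V″(s_i(ħ)) + 2∑_{j≠i} 1/(s_i(ħ) − s_j(ħ))², T_{ij}(ħ) = −2/(s_i(ħ) − s_j(ħ))² for i ≠ j. -/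
open Finset Polynomial

/-- The Hessian matrix `T` of the paper: `T i i = (1/ħ) vpp i + 2 ∑_{k≠i} 1/(σ i − σ k)²`,
`T i j = −2/(σ i − σ j)²` for `i ≠ j`; here `vpp i` is the second derivative of the
potential evaluated at `σ i`. -/
noncomputable def hessianT (m : ℕ) (hbar : ℂ) (vpp : Fin m → ℂ) (σ : Fin m → ℂ) :
    Matrix (Fin m) (Fin m) ℂ :=
  Matrix.of fun i j =>
    if i = j then (1 / hbar) * vpp i + 2 * ∑ k ∈ univ.erase i, 1 / (σ i - σ k) ^ 2
    else -2 / (σ i - σ j) ^ 2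

/-!
Differentiate the `i`-th Bethe equation `V'(s_i) = 2ħ ∑_{j≠i} 1/(s_i - s_j)` in `ħ` along the
interval (derivatives within a nontrivial interval are unique), multiply the result by `ħ` and
use the Bethe equation once more to replace `2ħ ∑_{j≠i} 1/(s_i - s_j)` by `V'(s_i)`; what
remains is the `i`-th row of `ħ² T(ħ) s'(ħ)`.
-/

theorem Set.OrdConnected.uniqueDiffOn {I : Set ℝ} (hI : I.OrdConnected) (hn : I.Nontrivial) :
    UniqueDiffOn ℝ I := fun x hx => by
  obtain ⟨y, hy, hyx⟩ := hn.exists_ne x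
  exact (uniqueDiffOn_uIcc hyx.symm x left_mem_uIcc).mono (hI.uIcc_subset hx hy)

theorem HasDerivWithinAt.sum_one_div_sub {𝕜 𝕜' ι : Type*} [NontriviallyNormedField 𝕜]
    [NontriviallyNormedField 𝕜'] [NormedAlgebra 𝕜 𝕜'] {S : Set 𝕜} {x : 𝕜}
    {s : 𝕜 → ι → 𝕜'} {s' : ι → 𝕜'} {J : Finset ι} {i : ι}
    (hs : ∀ j, HasDerivWithinAt (fun τ => s τ j) (s' j) S x)
    (hne : ∀ j ∈ J, s x i ≠ s x j) :
    HasDerivWithinAt (fun τ => ∑ j ∈ J, 1 / (s τ i - s τ j))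
      (-∑ j ∈ J, (s' i - s' j) / (s x i - s x j) ^ 2) S x := by
  rw [← sum_neg_distrib]
  refine HasDerivWithinAt.fun_sum fun j hj => ?_
  exact ((hasDerivWithinAt_const x S 1).fun_div ((hs i).fun_sub (hs j))
    (sub_ne_zero.mpr (hne j hj))).congr_deriv (by ring)

theorem hessianT_mul_sum (m : ℕ) (hbar : ℂ) (vpp σ v : Fin m → ℂ) (i : Fin m) :
    ∑ j, hessianT m hbar vpp σ i j * v j
      = 1 / hbar * vpp i * v i + 2 * ∑ j ∈ univ.erase i, (v i - v j) / (σ i - σ j) ^ 2 := by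
  have hoff : ∀ j ∈ univ.erase i,
      hessianT m hbar vpp σ i j * v j = -2 * v j / (σ i - σ j) ^ 2 :=
    fun j hj => by simp [hessianT, (ne_of_mem_erase hj).symm, div_mul_eq_mul_div]
  rw [← add_sum_erase _ _ (mem_univ i), sum_congr rfl hoff]
  simp only [hessianT, Matrix.of_apply, if_pos, add_mul, mul_sum, sum_mul, add_assoc,
    ← sum_add_distrib]
  congr 1
  exact sum_congr rfl fun j _ => by ring

theorem bethe_equation_deriv (V : ℂ[X]) {ι : Type*} [Fintype ι] [DecidableEq ι]
    {I : Set ℝ} {h : ℝ} (hud : UniqueDiffWithinAt ℝ I h) (hh : h ∈ I)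
    {s : ℝ → ι → ℂ} {s' : ι → ℂ} {i : ι}
    (hdiff : ∀ j, HasDerivWithinAt (fun τ => s τ j) (s' j) I h)
    (hdist : ∀ j, j ≠ i → s h i ≠ s h j)
    (hBethe : ∀ τ ∈ I, V.derivative.eval (s τ i)
        = 2 * (τ : ℂ) * ∑ j ∈ univ.erase i, 1 / (s τ i - s τ j)) :
    V.derivative.derivative.eval (s h i) * s' i
      = 2 * ∑ j ∈ univ.erase i, 1 / (s h i - s h j)
        - 2 * h * ∑ j ∈ univ.erase i, (s' i - s' j) / (s h i - s h j) ^ 2 := by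
  have hV : HasDerivWithinAt (fun τ => V.derivative.eval (s τ i))
      (V.derivative.derivative.eval (s h i) * s' i) I h :=
    (V.derivative.hasDerivAt _).comp_hasDerivWithinAt h (hdiff i)
  have hrhs := ((Complex.ofRealCLM.hasDerivWithinAt (s := I) (x := h)).const_mul (2 : ℂ)).mul
    (HasDerivWithinAt.sum_one_div_sub (J := univ.erase i) hdiff fun j hj =>
      hdist j (ne_of_mem_erase hj))
  refine (hud.eq_deriv _ hV (hrhs.congr_of_mem hBethe hh)).trans ?_
  simp only [Complex.ofRealCLM_apply, Complex.ofReal_one]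
  ring

/-- If `s(ħ)` is a differentiable family of pairwise distinct points
solving the Bethe equations as `ħ` varies in an interval `I ⊆ ℝ \ {0}`, then
`V′(s i (ħ)) = ħ² ∑ j, T i j (ħ) · s j ′(ħ)`, where `T(ħ)` is the Hessian matrix at
`s(ħ)`. -/
theorem bethe_roots_hbar_velocity (m : ℕ) (V : Polynomial ℂ)
    (I : Set ℝ) (hI : I.OrdConnected) (hInontriv : I.Nontrivial) (hI0 : (0 : ℝ) ∉ I)
    (s s' : ℝ → Fin m → ℂ)
    (hdiff : ∀ h ∈ I, ∀ i, HasDerivWithinAt (fun τ => s τ i) (s' h i) I h)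
    (hdist : ∀ h ∈ I, ∀ i j, i ≠ j → s h i ≠ s h j)
    (hBethe : ∀ h ∈ I, ∀ i,
      V.derivative.eval (s h i)
        = 2 * (h : ℂ) * ∑ j ∈ univ.erase i, 1 / (s h i - s h j)) :
    ∀ h ∈ I, ∀ i,
      V.derivative.eval (s h i)
        = (h : ℂ) ^ 2 * ∑ j, hessianT m (h : ℂ)
            (fun k => V.derivative.derivative.eval (s h k)) (s h) i j * s' h j := by
  intro h hh i
  have hh0 : (h : ℂ) ≠ 0 := Complex.ofReal_ne_zero.mpr (ne_of_mem_of_not_mem hh hI0)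
  have hderiv := bethe_equation_deriv V (hI.uniqueDiffOn hInontriv h hh) hh (hdiff h hh)
    (fun j hj => hdist h hh i j hj.symm) fun τ hτ => hBethe τ hτ i
  rw [hessianT_mul_sum, hBethe h hh i]
  have hsq : (h : ℂ) ^ 2 * (1 / h) = h := by field_simp
  linear_combination -(h : ℂ) * hderiv - V.derivative.derivative.eval (s h i) * s' h i * hsq
end
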